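/- arXiv:1708.06188 — 4 statements merged into one kernel-verified Lean document; each statement's English description precedes it below -/
import Mathlib

section
/- Let d ≥ 1, let Θ ⊆ ℝ^d be a closed set with nonempty complement A = ℝ^d ∖ Θ, and suppose μ: ℝ^d → ℝ^m is differentiable at every point of A with bounded derivative on A. Then the optimal intrinsic Lipschitz constant of μ on A equals the supremum of the derivative norms: sup{ ‖μ(x) − μ(y)‖ / ρ(x,y) : x, y ∈ A with 0 < ρ(x,y) < ∞ } = sup{ ‖μ'(x)‖ : x ∈ A }, where ρ is the intrinsic metric on A and ‖μ'(x)‖ denotes the operator norm of the derivative. -/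
open Set ENNReal

/-- The length of a curve `γ : ℝ → ℝ^d` (considered on the parameter interval `[0,1]`):
the supremum over all partitions `0 = t₀ < ⋯ < tₙ = 1` of `∑ ‖γ tₖ - γ tₖ₋₁‖`,
possibly infinite.  This coincides with the total variation of `γ` on `[0,1]`. -/
noncomputable def curveLength {d : ℕ} (γ : ℝ → EuclideanSpace ℝ (Fin d)) : ℝ≥0∞ :=
  eVariationOn γ (Set.Icc 0 1)

/-- The intrinsic (geodesic) metric of a set `A ⊆ ℝ^d`: the infimum of the lengths of
curves in `A` from `x` to `y`; the infimum over the empty set being `∞`. -/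
noncomputable def intrinsicDist {d : ℕ} (A : Set (EuclideanSpace ℝ (Fin d)))
    (x y : EuclideanSpace ℝ (Fin d)) : ℝ≥0∞ :=
  ⨅ γ ∈ {γ : ℝ → EuclideanSpace ℝ (Fin d) |
      ContinuousOn γ (Set.Icc 0 1) ∧ γ '' Set.Icc 0 1 ⊆ A ∧ γ 0 = x ∧ γ 1 = y},
    curveLength γ

/-! Let `C = sup_{x ∈ A} ‖μ'(x)‖`. Since `A` is open, the mean value inequality makes `μ`
`C`-Lipschitz on a ball around each point of `A`. By compactness (a Lebesgue number), the
parameter interval of a curve in `A` splits into finitely many pieces each mapped into one such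
ball; telescoping gives `‖μ(γ 0) - μ(γ 1)‖ ≤ C ℓ(γ)`, hence `‖μ x - μ y‖ ≤ C ρ(x, y)`.
Conversely, on a ball inside `A` the intrinsic metric is the Euclidean one (segments are
admissible curves), so the optimal intrinsic constant bounds `‖μ p - μ x‖ / ‖p - x‖` near `x`,
and therefore bounds `‖μ'(x)‖`. -/

open Filter Topology NNReal

theorem edist_comp_le_mul_eVariationOn_of_locally_lipschitzOnWith {α β : Type*}
    [PseudoEMetricSpace α] [PseudoEMetricSpace β] {f : α → β} {C : ℝ≥0} {γ : ℝ → α} {a b : ℝ}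
    (hab : a ≤ b) (hγ : ContinuousOn γ (Icc a b))
    (hf : ∀ t ∈ Icc a b, ∃ U ∈ 𝓝 (γ t), LipschitzOnWith C f U) :
    edist (f (γ a)) (f (γ b)) ≤ C * eVariationOn γ (Icc a b) := by
  choose U hU hfU using fun t : Icc a b => hf t t.2
  obtain ⟨t, ht0, htmono, ⟨n, htn⟩, htU⟩ :=
    exists_monotone_Icc_subset_open_cover_Icc hab
      (c := fun s => (Icc a b).domRestrict γ ⁻¹' interior (U s))
      (fun s => (continuousOn_iff_continuous_domRestrict.mp hγ).isOpen_preimage _ isOpen_interior)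
      (fun s _ => mem_iUnion.mpr ⟨s, mem_interior_iff_mem_nhds.mpr (hU s)⟩)
  have hstep : ∀ i,
      edist (f (γ (t i))) (f (γ (t (i + 1)))) ≤ C * edist (γ (t i)) (γ (t (i + 1))) := by
    intro i
    obtain ⟨s, hs⟩ := htU i
    have hle : t i ≤ t (i + 1) := htmono (Nat.le_succ i)
    exact hfU s (interior_subset (hs (left_mem_Icc.mpr hle)))
      (interior_subset (hs (right_mem_Icc.mpr hle)))
  calc edist (f (γ a)) (f (γ b)) = edist (f (γ (t 0))) (f (γ (t n))) := by
        rw [ht0, htn n le_rfl]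
    _ ≤ ∑ i ∈ Finset.range n, edist (f (γ (t i))) (f (γ (t (i + 1)))) :=
        edist_le_range_sum_edist (fun i => f (γ (t i))) n
    _ ≤ ∑ i ∈ Finset.range n, C * edist (γ (t i)) (γ (t (i + 1))) :=
        Finset.sum_le_sum fun i _ => hstep i
    _ = C * ∑ i ∈ Finset.range n, edist (γ (t (i + 1))) (γ (t i)) := by
        simp only [Finset.mul_sum, edist_comm]
    _ ≤ C * eVariationOn γ (Icc a b) := by
        gcongr
        exact eVariationOn.sum_le (u := fun i => (t i : ℝ)) (fun i j hij => htmono hij)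
          fun i => (t i).2

theorem exists_mem_nhds_lipschitzOnWith_of_nnnorm_fderiv_le {E F : Type*}
    [NormedAddCommGroup E] [NormedSpace ℝ E] [NormedAddCommGroup F] [NormedSpace ℝ F]
    {f : E → F} {A : Set E} (hA : IsOpen A) (hf : ∀ x ∈ A, DifferentiableAt ℝ f x) {C : ℝ≥0}
    (hC : ∀ x ∈ A, ‖fderiv ℝ f x‖₊ ≤ C) {x : E} (hx : x ∈ A) :
    ∃ U ∈ 𝓝 x, LipschitzOnWith C f U := by
  obtain ⟨r, hr, hball⟩ := Metric.isOpen_iff.mp hA x hx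
  exact ⟨_, Metric.ball_mem_nhds x hr, (convex_ball x r).lipschitzOnWith_of_nnnorm_fderiv_le
    (fun z hz => hf z (hball hz)) (fun z hz => hC z (hball hz))⟩

section IntrinsicDist

variable {d : ℕ} {A : Set (EuclideanSpace ℝ (Fin d))}

def admissibleCurves (A : Set (EuclideanSpace ℝ (Fin d))) (x y : EuclideanSpace ℝ (Fin d)) :
    Set (ℝ → EuclideanSpace ℝ (Fin d)) :=
  {γ | ContinuousOn γ (Icc 0 1) ∧ γ '' Icc 0 1 ⊆ A ∧ γ 0 = x ∧ γ 1 = y}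

theorem intrinsicDist_eq_iInf_admissibleCurves (x y : EuclideanSpace ℝ (Fin d)) :
    intrinsicDist A x y =
      ⨅ γ : admissibleCurves A x y, curveLength (γ : ℝ → EuclideanSpace ℝ (Fin d)) :=
  iInf_subtype'

theorem curveLength_lineMap_le (x y : EuclideanSpace ℝ (Fin d)) :
    curveLength (AffineMap.lineMap x y : ℝ → EuclideanSpace ℝ (Fin d)) ≤ edist x y := by
  have hid : eVariationOn (id : ℝ → ℝ) (Icc 0 1) = 1 := by
    simpa only [inter_self, id, sub_zero, ENNReal.ofReal_one] using
      monotoneOn_id.eVariationOn_eq (s := Icc (0 : ℝ) 1) (left_mem_Icc.mpr zero_le_one)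
        (right_mem_Icc.mpr zero_le_one)
  calc curveLength (AffineMap.lineMap x y : ℝ → EuclideanSpace ℝ (Fin d))
      ≤ nndist x y * eVariationOn (id : ℝ → ℝ) (Icc 0 1) :=
        ((lipschitzWith_lineMap x y).lipschitzOnWith (s := univ)).comp_eVariationOn_le
          (mapsTo_univ _ _)
    _ = edist x y := by rw [hid, mul_one, edist_nndist]

theorem edist_le_intrinsicDist (x y : EuclideanSpace ℝ (Fin d)) :
    edist x y ≤ intrinsicDist A x y := by
  refine le_iInf₂ fun γ ⟨_, _, h0, h1⟩ => ?_
  rw [← h0, ← h1]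
  exact eVariationOn.edist_le γ (left_mem_Icc.mpr zero_le_one) (right_mem_Icc.mpr zero_le_one)

theorem intrinsicDist_eq_edist_of_segment_subset {x y : EuclideanSpace ℝ (Fin d)}
    (h : segment ℝ x y ⊆ A) : intrinsicDist A x y = edist x y := by
  refine le_antisymm ?_ (edist_le_intrinsicDist x y)
  refine iInf₂_le_of_le (AffineMap.lineMap x y) ⟨AffineMap.lineMap_continuous.continuousOn,
    ?_, AffineMap.lineMap_apply_zero x y, AffineMap.lineMap_apply_one x y⟩
    (curveLength_lineMap_le x y)
  rw [← segment_eq_image_lineMap]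
  exact h

theorem edist_le_mul_intrinsicDist {F : Type*} [NormedAddCommGroup F] [NormedSpace ℝ F]
    (hA : IsOpen A) {μ : EuclideanSpace ℝ (Fin d) → F} (hdiff : ∀ x ∈ A, DifferentiableAt ℝ μ x)
    {C : ℝ≥0} (hC : ∀ x ∈ A, ‖fderiv ℝ μ x‖₊ ≤ C) {x y : EuclideanSpace ℝ (Fin d)}
    (hxy : intrinsicDist A x y ≠ ⊤) :
    edist (μ x) (μ y) ≤ C * intrinsicDist A x y := by
  have hcurve : ∀ γ ∈ admissibleCurves A x y, edist (μ x) (μ y) ≤ C * curveLength γ := by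
    rintro γ ⟨hγ, hγA, rfl, rfl⟩
    exact edist_comp_le_mul_eVariationOn_of_locally_lipschitzOnWith zero_le_one hγ fun t ht =>
      exists_mem_nhds_lipschitzOnWith_of_nnnorm_fderiv_le hA hdiff hC (hγA (mem_image_of_mem γ ht))
  rw [intrinsicDist_eq_iInf_admissibleCurves] at hxy ⊢
  have : Nonempty (admissibleCurves A x y) := by
    by_contra h
    rw [not_nonempty_iff] at h
    exact hxy (iInf_of_empty _)
  rw [ENNReal.mul_iInf (by simp)]
  exact le_iInf fun γ => hcurve γ γ.2

end IntrinsicDist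

section IntrinsicSlopes

variable {d : ℕ} {F : Type*} [NormedAddCommGroup F] {A : Set (EuclideanSpace ℝ (Fin d))}
  {μ : EuclideanSpace ℝ (Fin d) → F}

def intrinsicSlopes (A : Set (EuclideanSpace ℝ (Fin d))) (μ : EuclideanSpace ℝ (Fin d) → F) :
    Set ℝ :=
  {r : ℝ | ∃ x ∈ A, ∃ y ∈ A, 0 < intrinsicDist A x y ∧ intrinsicDist A x y ≠ ⊤ ∧
    r = ‖μ x - μ y‖ / (intrinsicDist A x y).toReal}

theorem sSup_intrinsicSlopes_nonneg : 0 ≤ sSup (intrinsicSlopes A μ) :=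
  Real.sSup_nonneg fun _ ⟨_, _, _, _, _, _, hr⟩ => hr ▸ by positivity

theorem le_of_mem_intrinsicSlopes [NormedSpace ℝ F] (hA : IsOpen A)
    (hdiff : ∀ x ∈ A, DifferentiableAt ℝ μ x) {C : ℝ} (hC : ∀ x ∈ A, ‖fderiv ℝ μ x‖ ≤ C)
    {r : ℝ} (hr : r ∈ intrinsicSlopes A μ) : r ≤ C := by
  obtain ⟨x, hx, y, -, hpos, hfin, rfl⟩ := hr
  have hC0 : 0 ≤ C := (norm_nonneg _).trans (hC x hx)
  have hlip := edist_le_mul_intrinsicDist hA hdiff (C := C.toNNReal)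
    (fun z hz => by simpa [← NNReal.coe_le_coe, hC0] using hC z hz) hfin
  have := ENNReal.toReal_mono (ENNReal.mul_ne_top ENNReal.coe_ne_top hfin) hlip
  rw [div_le_iff₀ (ENNReal.toReal_pos hpos.ne' hfin)]
  simpa [← dist_edist, dist_eq_norm, hC0] using this

theorem norm_fderiv_le_sSup_intrinsicSlopes [NormedSpace ℝ F] (hA : IsOpen A)
    (hbdd : BddAbove (intrinsicSlopes A μ)) {x : EuclideanSpace ℝ (Fin d)} (hx : x ∈ A) :
    ‖fderiv ℝ μ x‖ ≤ sSup (intrinsicSlopes A μ) := by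
  obtain ⟨r, hr, hball⟩ := Metric.isOpen_iff.mp hA x hx
  refine norm_fderiv_le_of_lip' ℝ sSup_intrinsicSlopes_nonneg ?_
  filter_upwards [Metric.ball_mem_nhds x hr] with p hp
  rcases eq_or_ne p x with rfl | hpx
  · simp
  have hdist : intrinsicDist A x p = edist x p := intrinsicDist_eq_edist_of_segment_subset
    (((convex_ball x r).segment_subset (Metric.mem_ball_self hr) hp).trans hball)
  have hpx' : 0 < ‖p - x‖ := norm_pos_iff.mpr (sub_ne_zero.mpr hpx)
  have hmem : ‖μ x - μ p‖ / ‖p - x‖ ∈ intrinsicSlopes A μ :=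
    ⟨x, hx, p, hball hp, by simpa [hdist] using hpx.symm, by simp [hdist],
      by rw [hdist, edist_dist, ENNReal.toReal_ofReal dist_nonneg, dist_eq_norm', norm_sub_rev]⟩
  have := le_csSup hbdd hmem
  rwa [div_le_iff₀ hpx', norm_sub_rev] at this

end IntrinsicSlopes

theorem intrinsic_lipschitz_constant_eq_sup_deriv_general
    (d m : ℕ) (Θ : Set (EuclideanSpace ℝ (Fin d))) (hΘ : IsClosed Θ)
    (A : Set (EuclideanSpace ℝ (Fin d))) (hA : A = Θᶜ)
    (μ : EuclideanSpace ℝ (Fin d) → EuclideanSpace ℝ (Fin m))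
    (hdiff : ∀ x ∈ A, DifferentiableAt ℝ μ x)
    (hbound : ∃ C : ℝ, ∀ x ∈ A, ‖fderiv ℝ μ x‖ ≤ C) :
    sSup {r : ℝ | ∃ x ∈ A, ∃ y ∈ A, 0 < intrinsicDist A x y ∧ intrinsicDist A x y ≠ ⊤ ∧
        r = ‖μ x - μ y‖ / (intrinsicDist A x y).toReal}
      = sSup {r : ℝ | ∃ x ∈ A, r = ‖fderiv ℝ μ x‖} := by
  change sSup (intrinsicSlopes A μ) = _
  have hAopen : IsOpen A := hA ▸ hΘ.isOpen_compl
  obtain ⟨C, hC⟩ := hbound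
  have hbdd_deriv : BddAbove {r : ℝ | ∃ x ∈ A, r = ‖fderiv ℝ μ x‖} :=
    ⟨C, by rintro r ⟨x, hx, rfl⟩; exact hC x hx⟩
  have hbdd_slopes : BddAbove (intrinsicSlopes A μ) :=
    ⟨C, fun r hr => le_of_mem_intrinsicSlopes hAopen hdiff hC hr⟩
  refine le_antisymm ?_ ?_
  · refine Real.sSup_le (fun r hr => le_of_mem_intrinsicSlopes hAopen hdiff ?_ hr)
      (Real.sSup_nonneg (by rintro r ⟨x, -, rfl⟩; positivity))
    exact fun x hx => le_csSup hbdd_deriv ⟨x, hx, rfl⟩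
  · refine Real.sSup_le ?_ sSup_intrinsicSlopes_nonneg
    rintro r ⟨x, hx, rfl⟩
    exact norm_fderiv_le_sSup_intrinsicSlopes hAopen hbdd_slopes hx

/-- for `Θ ⊆ ℝ^d` closed with nonempty complement `A` and `μ : ℝ^d → ℝ^m`
differentiable on `A` with bounded derivative, the optimal Lipschitz constant of `μ|_A`
w.r.t. the intrinsic metric on `A` equals `sup { ‖μ'(x)‖ : x ∈ A }`. -/
theorem intrinsic_lipschitz_constant_eq_sup_deriv
    (d m : ℕ) (hd : 1 ≤ d) (Θ : Set (EuclideanSpace ℝ (Fin d))) (hΘ : IsClosed Θ)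
    (A : Set (EuclideanSpace ℝ (Fin d))) (hA : A = Θᶜ) (hAne : A.Nonempty)
    (μ : EuclideanSpace ℝ (Fin d) → EuclideanSpace ℝ (Fin m))
    (hdiff : ∀ x ∈ A, DifferentiableAt ℝ μ x)
    (hbound : ∃ C : ℝ, ∀ x ∈ A, ‖fderiv ℝ μ x‖ ≤ C) :
    sSup {r : ℝ | ∃ x ∈ A, ∃ y ∈ A, 0 < intrinsicDist A x y ∧ intrinsicDist A x y ≠ ⊤ ∧
        r = ‖μ x - μ y‖ / (intrinsicDist A x y).toReal}
      = sSup {r : ℝ | ∃ x ∈ A, r = ‖fderiv ℝ μ x‖} :=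
  intrinsic_lipschitz_constant_eq_sup_deriv_general d m Θ hΘ A hA μ hdiff hbound
end

section
/- Let ξ ∈ ℝ and c > 0, and define φ̄: ℝ → ℝ by φ̄(x) = (x−ξ)|x−ξ| φ((x−ξ)/c). Then φ̄ is twice differentiable at every point x ≠ ξ, the second derivative satisfies |φ̄''(x)| ≤ 50 for all x ≠ ξ and φ̄''(x) = 0 for |x−ξ| > c, and the one-sided limits of φ̄'' at ξ exist with lim_{x→ξ+} φ̄''(x) = 2 and lim_{x→ξ−} φ̄''(x) = −2. -/
open Filter

/-- The bump function `φ(u) = (1+u)³(1-u)³` for `|u| ≤ 1` and `φ(u) = 0` otherwise. -/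
noncomputable def phi (u : ℝ) : ℝ := if |u| ≤ 1 then (1 + u) ^ 3 * (1 - u) ^ 3 else 0

/-- `φ̄(x) = (x-ξ)|x-ξ| φ((x-ξ)/c)`. -/
noncomputable def phibar (ξ c : ℝ) (x : ℝ) : ℝ := (x - ξ) * |x - ξ| * phi ((x - ξ) / c)

/-!
Writing `φ(u) = max (1 - u²) 0 ^ 3`, the function `ψ(u) = u² φ(u)` is `C²`, because
`y ↦ max y 0 ^ n` is `C¹` with derivative `n · max y 0 ^ (n-1)` once `n ≥ 2`. Near any `x ≠ ξ`
the factor `(x-ξ)|x-ξ|` is `±(x-ξ)²`, so there `φ̄ = ± c² ψ((· - ξ)/c)` and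
`φ̄''(x) = sign(x-ξ) ψ''((x-ξ)/c)`. Everything then follows from the explicit polynomial
expression of `ψ''` in `u²` and `max (1 - u²) 0`: it is bounded by `50`, vanishes for `|u| > 1`,
and is continuous with `ψ''(0) = 2`.
-/

open Topology Asymptotics

theorem hasDerivAt_max_zero_pow {n : ℕ} (hn : 2 ≤ n) (x : ℝ) :
    HasDerivAt (fun y : ℝ => max y 0 ^ n) (n * max x 0 ^ (n - 1)) x := by
  have hn0 : (0 : ℝ) ^ n = 0 := zero_pow (by omega)
  have hn1 : (0 : ℝ) ^ (n - 1) = 0 := zero_pow (by omega)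
  rcases lt_trichotomy x 0 with hx | rfl | hx
  · have hzero : (fun y : ℝ => max y 0 ^ n) =ᶠ[𝓝 x] fun _ => 0 := by
      filter_upwards [Iio_mem_nhds hx] with y (hy : y < 0)
      rw [max_eq_right hy.le, hn0]
    simpa [max_eq_right hx.le, hn1] using (hasDerivAt_const x (0 : ℝ)).congr_of_eventuallyEq hzero
  · rw [hasDerivAt_iff_isLittleO_nhds_zero]
    have hbound : (fun h : ℝ => max h 0 ^ n) =O[𝓝 0] fun h => h ^ n :=
      IsBigO.of_bound' <| Eventually.of_forall fun h => by
        rw [norm_pow, norm_pow]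
        gcongr
        rcases le_total h 0 with h0 | h0 <;> simp [h0, abs_nonneg]
    simpa [hn0, hn1] using hbound.trans_isLittleO (isLittleO_pow_id (by omega))
  · have hpow : (fun y : ℝ => max y 0 ^ n) =ᶠ[𝓝 x] fun y => y ^ n := by
      filter_upwards [Ioi_mem_nhds hx] with y (hy : 0 < y)
      rw [max_eq_left hy.le]
    simpa [max_eq_left hx.le] using (hasDerivAt_pow n x).congr_of_eventuallyEq hpow

theorem hasDerivAt_max_one_sub_sq_pow {n : ℕ} (hn : 2 ≤ n) (u : ℝ) :
    HasDerivAt (fun v : ℝ => max (1 - v ^ 2) 0 ^ n)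
      (n * max (1 - u ^ 2) 0 ^ (n - 1) * (-2 * u)) u := by
  have h := (hasDerivAt_max_zero_pow hn (1 - u ^ 2)).comp u ((hasDerivAt_pow 2 u).const_sub 1)
  exact h.congr_deriv (by norm_num)

theorem phi_eq_max_pow (u : ℝ) : phi u = max (1 - u ^ 2) 0 ^ 3 := by
  rw [phi]
  split_ifs with h
  · rw [max_eq_left (by nlinarith [sq_abs u, abs_nonneg u])]
    ring
  · rw [max_eq_right (by nlinarith [sq_abs u, abs_nonneg u])]
    norm_num

noncomputable def psi (u : ℝ) : ℝ := u ^ 2 * max (1 - u ^ 2) 0 ^ 3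

noncomputable def psiDeriv (u : ℝ) : ℝ :=
  2 * u * max (1 - u ^ 2) 0 ^ 3 - 6 * u ^ 3 * max (1 - u ^ 2) 0 ^ 2

noncomputable def psiDeriv2 (u : ℝ) : ℝ :=
  2 * max (1 - u ^ 2) 0 ^ 3 - 30 * u ^ 2 * max (1 - u ^ 2) 0 ^ 2
    + 24 * u ^ 4 * max (1 - u ^ 2) 0

theorem hasDerivAt_psi (u : ℝ) : HasDerivAt psi (psiDeriv u) u := by
  have h : HasDerivAt psi _ u :=
    (hasDerivAt_pow 2 u).mul (hasDerivAt_max_one_sub_sq_pow (n := 3) (by norm_num) u)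
  convert h using 1
  norm_num [psiDeriv]
  ring

theorem hasDerivAt_psiDeriv (u : ℝ) : HasDerivAt psiDeriv (psiDeriv2 u) u := by
  have h3 := hasDerivAt_max_one_sub_sq_pow (n := 3) (by norm_num) u
  have h2 := hasDerivAt_max_one_sub_sq_pow (n := 2) (by norm_num) u
  have h : HasDerivAt psiDeriv _ u :=
    ((((hasDerivAt_id' u).const_mul 2).mul h3).sub (((hasDerivAt_pow 3 u).const_mul 6).mul h2))
  convert h using 1
  norm_num [psiDeriv2]
  ring

theorem continuous_psiDeriv2 : Continuous psiDeriv2 := by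
  unfold psiDeriv2
  fun_prop

theorem psiDeriv2_zero : psiDeriv2 0 = 2 := by
  norm_num [psiDeriv2]

theorem abs_psiDeriv2_le (u : ℝ) : |psiDeriv2 u| ≤ 50 := by
  rw [psiDeriv2]
  rcases le_total (1 - u ^ 2) 0 with h | h
  · simp [max_eq_right h]
  · rw [max_eq_left h, abs_le]
    constructor <;> nlinarith [sq_nonneg u, sq_nonneg (u ^ 2), sq_nonneg (1 - u ^ 2),
      sq_nonneg (u ^ 2 * (1 - u ^ 2))]

theorem psiDeriv2_eq_zero_of_one_lt_abs {u : ℝ} (hu : 1 < |u|) : psiDeriv2 u = 0 := by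
  have h : 1 - u ^ 2 ≤ 0 := by nlinarith [sq_abs u]
  simp [psiDeriv2, max_eq_right h]

theorem sq_mul_phi_div {c : ℝ} (hc : c ≠ 0) (t : ℝ) :
    t ^ 2 * phi (t / c) = c * (c * psi (t / c)) := by
  rw [phi_eq_max_pow, psi]
  field_simp

theorem phibar_eventuallyEq {ξ c x : ℝ} (hc : c ≠ 0) (hx : x ≠ ξ) :
    phibar ξ c =ᶠ[𝓝 x] fun y => Real.sign (x - ξ) * (c * (c * psi ((y - ξ) / c))) := by
  rcases hx.lt_or_gt with hx | hx
  · filter_upwards [Iio_mem_nhds hx] with y (hy : y < ξ)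
    rw [phibar, abs_of_neg (sub_neg.2 hy), Real.sign_of_neg (sub_neg.2 hx), ← sq_mul_phi_div hc]
    ring
  · filter_upwards [Ioi_mem_nhds hx] with y (hy : ξ < y)
    rw [phibar, abs_of_pos (sub_pos.2 hy), Real.sign_of_pos (sub_pos.2 hx), ← sq_mul_phi_div hc]
    ring

theorem HasDerivAt.const_mul_comp_sub_div {f : ℝ → ℝ} {f' ξ c x : ℝ} (hc : c ≠ 0)
    (hf : HasDerivAt f f' ((x - ξ) / c)) : HasDerivAt (fun y => c * f ((y - ξ) / c)) f' x := by
  have h := (hf.comp x (((hasDerivAt_id x).sub_const ξ).div_const c)).const_mul c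
  exact h.congr_deriv (by field_simp)

theorem hasDerivAt_deriv_phibar {ξ c x : ℝ} (hc : c ≠ 0) (hx : x ≠ ξ) :
    HasDerivAt (deriv (phibar ξ c)) (Real.sign (x - ξ) * psiDeriv2 ((x - ξ) / c)) x := by
  have hderiv : deriv (phibar ξ c) =ᶠ[𝓝 x]
      fun y => Real.sign (x - ξ) * (c * psiDeriv ((y - ξ) / c)) := by
    filter_upwards [(phibar_eventuallyEq hc hx).eventuallyEq_nhds] with y hy
    rw [hy.deriv_eq]
    exact ((((hasDerivAt_psi _).const_mul c).const_mul_comp_sub_div hc).const_mul _).deriv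
  exact (((hasDerivAt_psiDeriv _).const_mul_comp_sub_div hc).const_mul _).congr_of_eventuallyEq
    hderiv

theorem tendsto_psiDeriv2_comp_sub_div (ξ c : ℝ) :
    Tendsto (fun x => psiDeriv2 ((x - ξ) / c)) (𝓝 ξ) (𝓝 2) := by
  have hcont : Continuous fun x : ℝ => (x - ξ) / c := by fun_prop
  have h := (continuous_psiDeriv2.comp hcont).tendsto ξ
  rwa [Function.comp_apply, sub_self, zero_div, psiDeriv2_zero] at h

/-- `φ̄` is twice differentiable at every `x ≠ ξ`, with `|φ̄''(x)| ≤ 50`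
for `x ≠ ξ`, `φ̄''(x) = 0` for `|x-ξ| > c`, and one-sided limits
`φ̄''(ξ+) = 2`, `φ̄''(ξ-) = -2`. -/
theorem phibar_second_derivative_properties (ξ c : ℝ) (hc : 0 < c) :
    (∀ x : ℝ, x ≠ ξ → DifferentiableAt ℝ (deriv (phibar ξ c)) x) ∧
    (∀ x : ℝ, x ≠ ξ → |deriv (deriv (phibar ξ c)) x| ≤ 50) ∧
    (∀ x : ℝ, c < |x - ξ| → deriv (deriv (phibar ξ c)) x = 0) ∧
    Tendsto (deriv (deriv (phibar ξ c))) (nhdsWithin ξ (Set.Ioi ξ)) (nhds 2) ∧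
    Tendsto (deriv (deriv (phibar ξ c))) (nhdsWithin ξ (Set.Iio ξ)) (nhds (-2)) := by
  have hsecond : ∀ x, x ≠ ξ →
      deriv (deriv (phibar ξ c)) x = Real.sign (x - ξ) * psiDeriv2 ((x - ξ) / c) :=
    fun x hx => (hasDerivAt_deriv_phibar hc.ne' hx).deriv
  have hlim := tendsto_psiDeriv2_comp_sub_div ξ c
  refine ⟨fun x hx => (hasDerivAt_deriv_phibar hc.ne' hx).differentiableAt,
    fun x hx => ?_, fun x hx => ?_, ?_, ?_⟩
  · rw [hsecond x hx, abs_mul]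
    rcases Real.sign_apply_eq_of_ne_zero _ (sub_ne_zero.2 hx) with h | h <;>
      simpa [h] using abs_psiDeriv2_le _
  · have hxξ : x ≠ ξ := by
      rintro rfl
      rw [sub_self, abs_zero] at hx
      exact hc.not_gt hx
    rw [hsecond x hxξ, psiDeriv2_eq_zero_of_one_lt_abs, mul_zero]
    rwa [abs_div, abs_of_pos hc, one_lt_div hc]
  · refine (hlim.mono_left nhdsWithin_le_nhds).congr' ?_
    filter_upwards [self_mem_nhdsWithin] with x (hx : ξ < x)
    rw [hsecond x hx.ne', Real.sign_of_pos (sub_pos.2 hx), one_mul]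
  · refine (hlim.neg.mono_left nhdsWithin_le_nhds).congr' ?_
    filter_upwards [self_mem_nhdsWithin] with x (hx : x < ξ)
    rw [hsecond x hx.ne, Real.sign_of_neg (sub_neg.2 hx), neg_one_mul]
end

section
/- Let ξ ∈ ℝ and c > 0. Let μ: ℝ → ℝ be Lipschitz on (−∞, ξ) and Lipschitz on (ξ, ∞), so that the one-sided limits μ(ξ+) := lim_{x→ξ+} μ(x) and μ(ξ−) := lim_{x→ξ−} μ(x) exist, and let σ: ℝ → ℝ be continuous with σ(ξ) ≠ 0. Set α := (μ(ξ−) − μ(ξ+)) / (2σ(ξ)²) and let φ̄(x) = (x−ξ)|x−ξ| φ((x−ξ)/c). Then the function h(x) := μ(x)(1 + α φ̄'(x)) + (1/2) α φ̄''(x) σ(x)², defined for x ≠ ξ, has equal one-sided limits at ξ; more precisely, lim_{x→ξ+} h(x) = lim_{x→ξ−} h(x) = (μ(ξ+) + μ(ξ−))/2. -/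
/-! Near `ξ` the factor `(x - ξ)|x - ξ|` is `±(x - ξ)²` and `φ((x - ξ)/c) = (1 - ((x - ξ)/c)²)³`,
so on each side of `ξ` the function `φ̄` is `±P(x - ξ)` for the polynomial `P = X²(1 - (X/c)²)³`.
Hence `φ̄' → P'(0) = 0` and `φ̄'' → ±P''(0) = ±2`, so `h → μ(ξ±) ± α σ(ξ)²`, and the choice of `α`
makes both limits equal to `(μ(ξ+) + μ(ξ-))/2`. -/

open Filter

open Polynomial Topology

theorem Filter.EventuallyEq.deriv_of_isOpen {𝕜 F : Type*} [NontriviallyNormedField 𝕜]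
    [NormedAddCommGroup F] [NormedSpace 𝕜 F] {f g : 𝕜 → F} {s : Set 𝕜} {a : 𝕜}
    (hs : IsOpen s) (h : f =ᶠ[𝓝[s] a] g) : deriv f =ᶠ[𝓝[s] a] deriv g := by
  filter_upwards [eventually_eventually_nhdsWithin.2 h, self_mem_nhdsWithin] with x hx hxs
  exact EventuallyEq.deriv_eq (hs.nhdsWithin_eq hxs ▸ hx)

theorem Polynomial.deriv_eval_sub_const (P : ℝ[X]) (ξ : ℝ) :
    deriv (fun x => P.eval (x - ξ)) = fun x => P.derivative.eval (x - ξ) := by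
  funext x
  rw [deriv_comp_sub_const (f := fun x => P.eval x), Polynomial.deriv]

theorem tendsto_deriv_deriv_of_eventuallyEq_eval_sub {f : ℝ → ℝ} {s : Set ℝ} {ξ : ℝ}
    (hs : IsOpen s) (P : ℝ[X]) (hf : f =ᶠ[𝓝[s] ξ] fun x => P.eval (x - ξ)) :
    Tendsto (deriv f) (𝓝[s] ξ) (𝓝 (P.derivative.eval 0)) ∧
      Tendsto (deriv (deriv f)) (𝓝[s] ξ) (𝓝 (P.derivative.derivative.eval 0)) := by
  have hf' := hf.deriv_of_isOpen hs
  rw [deriv_eval_sub_const] at hf'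
  have hf'' := hf'.deriv_of_isOpen hs
  rw [deriv_eval_sub_const] at hf''
  have hlim (Q : ℝ[X]) : Tendsto (fun x => Q.eval (x - ξ)) (𝓝[s] ξ) (𝓝 (Q.eval 0)) := by
    have hQ : Continuous fun x => Q.eval (x - ξ) := by fun_prop
    simpa using (hQ.tendsto ξ).mono_left nhdsWithin_le_nhds
  exact ⟨(hlim _).congr' hf'.symm, (hlim _).congr' hf''.symm⟩

theorem Polynomial.derivative_X_sq_mul_eval_zero (Q : ℝ[X]) :
    (X ^ 2 * Q).derivative.eval 0 = 0 := by
  simp [derivative_mul]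

theorem Polynomial.derivative_derivative_X_sq_mul_eval_zero (Q : ℝ[X]) :
    (X ^ 2 * Q).derivative.derivative.eval 0 = 2 * Q.eval 0 := by
  simp [derivative_mul, one_add_one_eq_two]

noncomputable def phibarPoly (c : ℝ) : ℝ[X] := X ^ 2 * (1 - (C c⁻¹ * X) ^ 2) ^ 3

theorem phibarPoly_derivative_eval_zero (c : ℝ) : (phibarPoly c).derivative.eval 0 = 0 :=
  derivative_X_sq_mul_eval_zero _

theorem phibarPoly_derivative_derivative_eval_zero (c : ℝ) :
    (phibarPoly c).derivative.derivative.eval 0 = 2 := by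
  rw [phibarPoly, derivative_derivative_X_sq_mul_eval_zero]
  simp

theorem phi_eq_of_abs_le_one {u : ℝ} (hu : |u| ≤ 1) : phi u = (1 - u ^ 2) ^ 3 := by
  rw [phi, if_pos hu]
  ring

theorem eventually_abs_sub_div_le_one (ξ c : ℝ) : ∀ᶠ x in 𝓝 ξ, |(x - ξ) / c| ≤ 1 := by
  have hcont : Continuous fun x => |(x - ξ) / c| := by fun_prop
  exact (hcont.tendsto ξ).eventually (eventually_le_nhds (by simp))

theorem phibar_eventuallyEq_nhdsGT (ξ c : ℝ) :
    phibar ξ c =ᶠ[𝓝[>] ξ] fun x => (phibarPoly c).eval (x - ξ) := by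
  filter_upwards [self_mem_nhdsWithin, nhdsWithin_le_nhds (eventually_abs_sub_div_le_one ξ c)]
    with x hx hu
  rw [phibar, phi_eq_of_abs_le_one hu, abs_of_pos (sub_pos.2 hx)]
  simp only [phibarPoly, eval_mul, eval_pow, eval_X, eval_sub, eval_one, eval_C]
  ring

theorem phibar_eventuallyEq_nhdsLT (ξ c : ℝ) :
    phibar ξ c =ᶠ[𝓝[<] ξ] fun x => (-phibarPoly c).eval (x - ξ) := by
  filter_upwards [self_mem_nhdsWithin, nhdsWithin_le_nhds (eventually_abs_sub_div_le_one ξ c)]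
    with x hx hu
  rw [phibar, phi_eq_of_abs_le_one hu, abs_of_neg (sub_neg.2 hx)]
  simp only [phibarPoly, eval_neg, eval_mul, eval_pow, eval_X, eval_sub, eval_one, eval_C]
  ring

theorem tendsto_transformed_drift {l : Filter ℝ} {μ σ D₁ D₂ : ℝ → ℝ} {m d s : ℝ} (α : ℝ)
    (hμ : Tendsto μ l (𝓝 m)) (hD₁ : Tendsto D₁ l (𝓝 0)) (hD₂ : Tendsto D₂ l (𝓝 d))
    (hσ : Tendsto σ l (𝓝 s)) :
    Tendsto (fun x => μ x * (1 + α * D₁ x) + 1 / 2 * α * D₂ x * σ x ^ 2) l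
      (𝓝 (m + 1 / 2 * α * d * s ^ 2)) := by
  simpa using
    (hμ.mul ((hD₁.const_mul α).const_add 1)).add ((hD₂.const_mul (1 / 2 * α)).mul (hσ.pow 2))

theorem transformed_drift_one_sided_limits_general
    (ξ c : ℝ) (μ σ : ℝ → ℝ)
    (μplus μminus : ℝ)
    (hplus : Tendsto μ (nhdsWithin ξ (Set.Ioi ξ)) (nhds μplus))
    (hminus : Tendsto μ (nhdsWithin ξ (Set.Iio ξ)) (nhds μminus))
    (hσ : Continuous σ) (hσξ : σ ξ ≠ 0)
    (α : ℝ) (hα : α = (μminus - μplus) / (2 * (σ ξ) ^ 2))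
    (h : ℝ → ℝ)
    (hh : ∀ x : ℝ, x ≠ ξ →
      h x = μ x * (1 + α * deriv (phibar ξ c) x)
        + (1 / 2) * α * deriv (deriv (phibar ξ c)) x * (σ x) ^ 2) :
    Tendsto h (nhdsWithin ξ (Set.Ioi ξ)) (nhds ((μplus + μminus) / 2)) ∧
    Tendsto h (nhdsWithin ξ (Set.Iio ξ)) (nhds ((μplus + μminus) / 2)) := by
  have hασ : α * σ ξ ^ 2 = (μminus - μplus) / 2 := by
    rw [hα]
    field_simp
  have hσlim {s : Set ℝ} : Tendsto σ (𝓝[s] ξ) (𝓝 (σ ξ)) := hσ.continuousWithinAt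
  obtain ⟨hD₁R, hD₂R⟩ :=
    tendsto_deriv_deriv_of_eventuallyEq_eval_sub isOpen_Ioi _ (phibar_eventuallyEq_nhdsGT ξ c)
  obtain ⟨hD₁L, hD₂L⟩ :=
    tendsto_deriv_deriv_of_eventuallyEq_eval_sub isOpen_Iio _ (phibar_eventuallyEq_nhdsLT ξ c)
  simp only [phibarPoly_derivative_eval_zero, phibarPoly_derivative_derivative_eval_zero,
    derivative_neg, eval_neg, neg_zero] at hD₁R hD₂R hD₁L hD₂L
  constructor
  · have hR := (tendsto_transformed_drift α hplus hD₁R hD₂R hσlim).congr'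
      (eventually_mem_nhdsWithin.mono fun x (hx : x ∈ Set.Ioi ξ) => (hh x hx.ne').symm)
    convert hR using 2
    linear_combination -hασ
  · have hL := (tendsto_transformed_drift α hminus hD₁L hD₂L hσlim).congr'
      (eventually_mem_nhdsWithin.mono fun x (hx : x ∈ Set.Iio ξ) => (hh x hx.ne).symm)
    convert hL using 2
    linear_combination hασ

/-- with `α = (μ(ξ-) - μ(ξ+))/(2σ(ξ)²)`, the function
`h(x) = μ(x)(1 + α φ̄'(x)) + (1/2) α φ̄''(x) σ(x)²` has equal one-sided limits
at `ξ`, both equal to `(μ(ξ+) + μ(ξ-))/2`. -/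
theorem transformed_drift_one_sided_limits
    (ξ c : ℝ) (hc : 0 < c) (μ σ : ℝ → ℝ)
    (L : ℝ)
    (hμleft : ∀ x ∈ Set.Iio ξ, ∀ y ∈ Set.Iio ξ, |μ x - μ y| ≤ L * |x - y|)
    (hμright : ∀ x ∈ Set.Ioi ξ, ∀ y ∈ Set.Ioi ξ, |μ x - μ y| ≤ L * |x - y|)
    (μplus μminus : ℝ)
    (hplus : Tendsto μ (nhdsWithin ξ (Set.Ioi ξ)) (nhds μplus))
    (hminus : Tendsto μ (nhdsWithin ξ (Set.Iio ξ)) (nhds μminus))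
    (hσ : Continuous σ) (hσξ : σ ξ ≠ 0)
    (α : ℝ) (hα : α = (μminus - μplus) / (2 * (σ ξ) ^ 2))
    (h : ℝ → ℝ)
    (hh : ∀ x : ℝ, x ≠ ξ →
      h x = μ x * (1 + α * deriv (phibar ξ c) x)
        + (1 / 2) * α * deriv (deriv (phibar ξ c)) x * (σ x) ^ 2) :
    Tendsto h (nhdsWithin ξ (Set.Ioi ξ)) (nhds ((μplus + μminus) / 2)) ∧
    Tendsto h (nhdsWithin ξ (Set.Iio ξ)) (nhds ((μplus + μminus) / 2)) :=
  transformed_drift_one_sided_limits_general ξ c μ σ μplus μminus hplus hminus hσ hσξ α hα h hh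
end

section
/- For every ξ ∈ ℝ and every α ∈ ℝ with α ≠ 0 there exist c > 0 and a function Ĝ: ℝ → ℝ with the following properties: (i) Ĝ is continuously differentiable on ℝ; (ii) Ĝ(x) = x for all x with |x − ξ| ≥ c; (iii) Ĝ is piecewise cubic, i.e. there exist finitely many points ξ − c = a₀ < a₁ < … < a_n = ξ + c such that on each interval [a_{i−1}, a_i] the function Ĝ coincides with a polynomial of degree at most 3; (iv) Ĝ'(x) > 0 for all x ∈ ℝ and Ĝ is a bijection from ℝ onto ℝ whose inverse Ĝ⁻¹ is Lipschitz continuous; (v) Ĝ is twice differentiable at every x ≠ ξ and the one-sided limits of the second derivative at ξ satisfy lim_{x→ξ+} Ĝ''(x) = 2α and lim_{x→ξ−} Ĝ''(x) = −2α. -/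
open Filter NNReal

noncomputable section
namespace PCT
open Filter Set

/-- glue two C¹ pieces at a point `b` -/
theorem glue {f₁ f₂ g₁ g₂ : ℝ → ℝ} {b : ℝ}
    (hf₁ : ∀ y, HasDerivAt f₁ (g₁ y) y) (hf₂ : ∀ y, HasDerivAt f₂ (g₂ y) y)
    (hg₁ : Continuous g₁) (hg₂ : Continuous g₂)
    (hfeq : f₁ b = f₂ b) (hgeq : g₁ b = g₂ b) (y : ℝ) :
    HasDerivAt (fun x => if x ≤ b then f₁ x else f₂ x)
      (if y ≤ b then g₁ y else g₂ y) y := by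
  have key : ∀ z, z ≠ b → HasDerivAt (fun x => if x ≤ b then f₁ x else f₂ x)
      ((fun w => if w ≤ b then g₁ w else g₂ w) z) z := by
    intro z hz
    rcases lt_or_gt_of_ne hz with h | h
    · have heq : (fun x => if x ≤ b then f₁ x else f₂ x) =ᶠ[nhds z] f₁ := by
        filter_upwards [Iio_mem_nhds h] with w hw
        rw [if_pos (le_of_lt hw)]
      simp only [if_pos h.le]
      exact (heq.hasDerivAt_iff).mpr (hf₁ z)
    · have heq : (fun x => if x ≤ b then f₁ x else f₂ x) =ᶠ[nhds z] f₂ := by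
        filter_upwards [Ioi_mem_nhds h] with w hw
        rw [if_neg (not_le.mpr hw)]
      simp only [if_neg (not_le.mpr h)]
      exact (heq.hasDerivAt_iff).mpr (hf₂ z)
  rcases eq_or_ne y b with hy | hy
  · subst hy
    have hcf : ContinuousAt (fun x => if x ≤ y then f₁ x else f₂ x) y :=
      (Continuous.if_le (continuous_iff_continuousAt.mpr fun x => (hf₁ x).continuousAt)
        (continuous_iff_continuousAt.mpr fun x => (hf₂ x).continuousAt)
        continuous_id continuous_const
        (fun a ha => by simp only [id_eq] at ha; rw [ha]; exact hfeq)).continuousAt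
    have hcg : ContinuousAt (fun w => if w ≤ y then g₁ w else g₂ w) y :=
      (Continuous.if_le hg₁ hg₂ continuous_id continuous_const
        (fun a ha => by simp only [id_eq] at ha; rw [ha]; exact hgeq)).continuousAt
    have := hasDerivAt_of_hasDerivAt_of_ne key hcf hcg
    simpa using this
  · exact key y hy


variable (ξ α c : ℝ)


def p2 (x : ℝ) : ℝ := x + α / (9*c) * (x - ξ + c)^3
def p3 (x : ℝ) : ℝ := x - α * ((x - ξ)^2 + c * (x - ξ)/3 + 7*(x - ξ)^3/(9*c))
def p4 (x : ℝ) : ℝ := x + α * ((x - ξ)^2 - c * (x - ξ)/3 - 7*(x - ξ)^3/(9*c))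
def p5 (x : ℝ) : ℝ := x + α / (9*c) * (x - ξ - c)^3

def d2 (x : ℝ) : ℝ := 1 + α/(3*c) * (x - ξ + c)^2
def d3 (x : ℝ) : ℝ := 1 - α * (2*(x - ξ) + c/3 + 7*(x - ξ)^2/(3*c))
def d4 (x : ℝ) : ℝ := 1 + α * (2*(x - ξ) - c/3 - 7*(x - ξ)^2/(3*c))
def d5 (x : ℝ) : ℝ := 1 + α/(3*c) * (x - ξ - c)^2

def e2 (x : ℝ) : ℝ := 2*α/(3*c) * (x - ξ + c)
def e3 (x : ℝ) : ℝ := -(2*α) - 14*α*(x - ξ)/(3*c)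
def e4 (x : ℝ) : ℝ := 2*α - 14*α*(x - ξ)/(3*c)
def e5 (x : ℝ) : ℝ := 2*α/(3*c) * (x - ξ - c)

lemma hasDerivAt_p2 (x : ℝ) : HasDerivAt (p2 ξ α c) (d2 ξ α c x) x := by
  have h : HasDerivAt (p2 ξ α c)
      (1 + α/(9*c) * ((3:ℕ) * (x - ξ + c)^(3-1) * 1)) x := by
    exact (hasDerivAt_id x).add
      (((((hasDerivAt_id x).sub_const ξ).add_const c).pow 3).const_mul _)
  convert h using 1
  simp only [d2]; push_cast; ring

lemma hasDerivAt_p5 (x : ℝ) : HasDerivAt (p5 ξ α c) (d5 ξ α c x) x := by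
  have h : HasDerivAt (p5 ξ α c)
      (1 + α/(9*c) * ((3:ℕ) * (x - ξ - c)^(3-1) * 1)) x := by
    exact (hasDerivAt_id x).add
      (((((hasDerivAt_id x).sub_const ξ).sub_const c).pow 3).const_mul _)
  convert h using 1
  simp only [d5]; push_cast; ring

lemma hasDerivAt_p3 (x : ℝ) : HasDerivAt (p3 ξ α c) (d3 ξ α c x) x := by
  have ht : HasDerivAt (fun x : ℝ => x - ξ) 1 x := (hasDerivAt_id x).sub_const ξ
  have h : HasDerivAt (p3 ξ α c)
      (1 - α * (((2:ℕ) * (x - ξ)^(2-1) * 1) + c * 1/3 + 7 * ((3:ℕ) * (x - ξ)^(3-1) * 1)/(9*c))) x := by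
    refine (hasDerivAt_id x).sub ?_
    exact (((ht.pow 2).add (((ht.const_mul c)).div_const 3)).add
      (((ht.pow 3).const_mul 7).div_const (9*c))).const_mul α
  convert h using 1
  simp only [d3]; push_cast; ring

lemma hasDerivAt_p4 (x : ℝ) : HasDerivAt (p4 ξ α c) (d4 ξ α c x) x := by
  have ht : HasDerivAt (fun x : ℝ => x - ξ) 1 x := (hasDerivAt_id x).sub_const ξ
  have h : HasDerivAt (p4 ξ α c)
      (1 + α * (((2:ℕ) * (x - ξ)^(2-1) * 1) - c * 1/3 - 7 * ((3:ℕ) * (x - ξ)^(3-1) * 1)/(9*c))) x := by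
    refine (hasDerivAt_id x).add ?_
    exact (((ht.pow 2).sub (((ht.const_mul c)).div_const 3)).sub
      (((ht.pow 3).const_mul 7).div_const (9*c))).const_mul α
  convert h using 1
  simp only [d4]; push_cast; ring

lemma hasDerivAt_d2 (x : ℝ) : HasDerivAt (d2 ξ α c) (e2 ξ α c x) x := by
  have h : HasDerivAt (d2 ξ α c)
      (0 + α/(3*c) * ((2:ℕ) * (x - ξ + c)^(2-1) * 1)) x := by
    exact (hasDerivAt_const x 1).add
      (((((hasDerivAt_id x).sub_const ξ).add_const c).pow 2).const_mul _)
  convert h using 1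
  simp only [e2]; push_cast; ring

lemma hasDerivAt_d5 (x : ℝ) : HasDerivAt (d5 ξ α c) (e5 ξ α c x) x := by
  have h : HasDerivAt (d5 ξ α c)
      (0 + α/(3*c) * ((2:ℕ) * (x - ξ - c)^(2-1) * 1)) x := by
    exact (hasDerivAt_const x 1).add
      (((((hasDerivAt_id x).sub_const ξ).sub_const c).pow 2).const_mul _)
  convert h using 1
  simp only [e5]; push_cast; ring

lemma hasDerivAt_d3 (x : ℝ) : HasDerivAt (d3 ξ α c) (e3 ξ α c x) x := by
  have ht : HasDerivAt (fun x : ℝ => x - ξ) 1 x := (hasDerivAt_id x).sub_const ξ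
  have h : HasDerivAt (d3 ξ α c)
      (0 - α * ((2 * 1) + 0 + 7 * ((2:ℕ) * (x - ξ)^(2-1) * 1)/(3*c))) x := by
    refine (hasDerivAt_const x 1).sub ?_
    exact (((ht.const_mul 2).add (hasDerivAt_const x (c/3))).add
      (((ht.pow 2).const_mul 7).div_const (3*c))).const_mul α
  convert h using 1
  simp only [e3]; push_cast; ring

lemma hasDerivAt_d4 (x : ℝ) : HasDerivAt (d4 ξ α c) (e4 ξ α c x) x := by
  have ht : HasDerivAt (fun x : ℝ => x - ξ) 1 x := (hasDerivAt_id x).sub_const ξ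
  have h : HasDerivAt (d4 ξ α c)
      (0 + α * ((2 * 1) - 0 - 7 * ((2:ℕ) * (x - ξ)^(2-1) * 1)/(3*c))) x := by
    refine (hasDerivAt_const x 1).add ?_
    exact (((ht.const_mul 2).sub (hasDerivAt_const x (c/3))).sub
      (((ht.pow 2).const_mul 7).div_const (3*c))).const_mul α
  convert h using 1
  simp only [e4]; push_cast; ring

lemma cont_d2 : Continuous (d2 ξ α c) := by unfold d2; fun_prop
lemma cont_d3 : Continuous (d3 ξ α c) := by unfold d3; fun_prop
lemma cont_d4 : Continuous (d4 ξ α c) := by unfold d4; fun_prop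
lemma cont_d5 : Continuous (d5 ξ α c) := by unfold d5; fun_prop
lemma cont_e2 : Continuous (e2 ξ α c) := by unfold e2; fun_prop
lemma cont_e3 : Continuous (e3 ξ α c) := by unfold e3; fun_prop
lemma cont_e4 : Continuous (e4 ξ α c) := by unfold e4; fun_prop
lemma cont_e5 : Continuous (e5 ξ α c) := by unfold e5; fun_prop




-- the transform, built as nested if-chains
def G5 (x : ℝ) : ℝ := if x ≤ ξ + c then p5 ξ α c x else x
def G4 (x : ℝ) : ℝ := if x ≤ ξ + c/2 then p4 ξ α c x else G5 ξ α c x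
def G3 (x : ℝ) : ℝ := if x ≤ ξ then p3 ξ α c x else G4 ξ α c x
def G2 (x : ℝ) : ℝ := if x ≤ ξ - c/2 then p2 ξ α c x else G3 ξ α c x
def Gf (x : ℝ) : ℝ := if x ≤ ξ - c then x else G2 ξ α c x

def D5 (x : ℝ) : ℝ := if x ≤ ξ + c then d5 ξ α c x else 1
def D4 (x : ℝ) : ℝ := if x ≤ ξ + c/2 then d4 ξ α c x else D5 ξ α c x
def D3 (x : ℝ) : ℝ := if x ≤ ξ then d3 ξ α c x else D4 ξ α c x
def D2 (x : ℝ) : ℝ := if x ≤ ξ - c/2 then d2 ξ α c x else D3 ξ α c x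
def Df (x : ℝ) : ℝ := if x ≤ ξ - c then 1 else D2 ξ α c x

def E5 (x : ℝ) : ℝ := if x ≤ ξ + c then e5 ξ α c x else 0
def E4 (x : ℝ) : ℝ := if x ≤ ξ + c/2 then e4 ξ α c x else E5 ξ α c x
def D23 (x : ℝ) : ℝ := if x ≤ ξ - c/2 then d2 ξ α c x else d3 ξ α c x
def DL (x : ℝ) : ℝ := if x ≤ ξ - c then 1 else D23 ξ α c x
def E23 (x : ℝ) : ℝ := if x ≤ ξ - c/2 then e2 ξ α c x else e3 ξ α c x
def EL (x : ℝ) : ℝ := if x ≤ ξ - c then 0 else E23 ξ α c x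

variable {c}

-- boundary equalities
lemma bE5f : p5 ξ α c (ξ + c) = ξ + c := by simp only [p5]; ring
lemma bE5d : d5 ξ α c (ξ + c) = 1 := by simp only [d5]; ring
lemma bE4f (hc : 0 < c) : p4 ξ α c (ξ + c/2) = G5 ξ α c (ξ + c/2) := by
  rw [G5, if_pos (by linarith)]
  simp only [p4, p5]
  field_simp
  ring
lemma bE4d (hc : 0 < c) : d4 ξ α c (ξ + c/2) = D5 ξ α c (ξ + c/2) := by
  rw [D5, if_pos (by linarith)]
  simp only [d4, d5]
  field_simp
  ring
lemma bE3f (hc : 0 < c) : p3 ξ α c ξ = G4 ξ α c ξ := by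
  rw [G4, if_pos (by linarith)]
  simp only [p3, p4]; ring
lemma bE3d (hc : 0 < c) : d3 ξ α c ξ = D4 ξ α c ξ := by
  rw [D4, if_pos (by linarith)]
  simp only [d3, d4]; ring
lemma bE2f (hc : 0 < c) : p2 ξ α c (ξ - c/2) = G3 ξ α c (ξ - c/2) := by
  rw [G3, if_pos (by linarith)]
  simp only [p2, p3]
  field_simp
  ring
lemma bE2d (hc : 0 < c) : d2 ξ α c (ξ - c/2) = D3 ξ α c (ξ - c/2) := by
  rw [D3, if_pos (by linarith)]
  simp only [d2, d3]
  field_simp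
  ring
lemma bE1f (hc : 0 < c) : (ξ - c) = G2 ξ α c (ξ - c) := by
  rw [G2, if_pos (by linarith)]
  simp only [p2]; ring
lemma bE1d (hc : 0 < c) : (1:ℝ) = D2 ξ α c (ξ - c) := by
  rw [D2, if_pos (by linarith)]
  simp only [d2]; ring

-- continuity of the derivative chains
lemma cont_D5 : Continuous (D5 ξ α c) :=
  Continuous.if_le (cont_d5 ξ α c) continuous_const continuous_id continuous_const
    (fun a ha => by rw [ha]; exact bE5d ξ α)
lemma cont_D4 (hc : 0 < c) : Continuous (D4 ξ α c) :=
  Continuous.if_le (cont_d4 ξ α c) (cont_D5 ξ α) continuous_id continuous_const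
    (fun a ha => by rw [ha]; exact bE4d ξ α hc)
lemma cont_D3 (hc : 0 < c) : Continuous (D3 ξ α c) :=
  Continuous.if_le (cont_d3 ξ α c) (cont_D4 ξ α hc) continuous_id continuous_const
    (fun a ha => by rw [ha]; exact bE3d ξ α hc)
lemma cont_D2 (hc : 0 < c) : Continuous (D2 ξ α c) :=
  Continuous.if_le (cont_d2 ξ α c) (cont_D3 ξ α hc) continuous_id continuous_const
    (fun a ha => by rw [ha]; exact bE2d ξ α hc)
lemma cont_Df (hc : 0 < c) : Continuous (Df ξ α c) :=
  Continuous.if_le continuous_const (cont_D2 ξ α hc) continuous_id continuous_const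
    (fun a ha => by rw [ha]; exact bE1d ξ α hc)
lemma cont_E5 : Continuous (E5 ξ α c) :=
  Continuous.if_le (cont_e5 ξ α c) continuous_const continuous_id continuous_const
    (fun a ha => by rw [ha]; simp only [e5]; ring)
lemma cont_E23 (hc : 0 < c) : Continuous (E23 ξ α c) :=
  Continuous.if_le (cont_e2 ξ α c) (cont_e3 ξ α c) continuous_id continuous_const
    (fun a ha => by rw [ha]; simp only [e2, e3]; field_simp; ring)

-- derivative chains
lemma hG5 (y : ℝ) : HasDerivAt (G5 ξ α c) (D5 ξ α c y) y :=
  glue (hasDerivAt_p5 ξ α c) (fun y => hasDerivAt_id' (x := y)) (cont_d5 ξ α c)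
    continuous_const (bE5f ξ α) (bE5d ξ α) y
lemma hG4 (hc : 0 < c) (y : ℝ) : HasDerivAt (G4 ξ α c) (D4 ξ α c y) y :=
  glue (hasDerivAt_p4 ξ α c) (hG5 ξ α) (cont_d4 ξ α c) (cont_D5 ξ α)
    (bE4f ξ α hc) (bE4d ξ α hc) y
lemma hG3 (hc : 0 < c) (y : ℝ) : HasDerivAt (G3 ξ α c) (D3 ξ α c y) y :=
  glue (hasDerivAt_p3 ξ α c) (hG4 ξ α hc) (cont_d3 ξ α c) (cont_D4 ξ α hc)
    (bE3f ξ α hc) (bE3d ξ α hc) y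
lemma hG2 (hc : 0 < c) (y : ℝ) : HasDerivAt (G2 ξ α c) (D2 ξ α c y) y :=
  glue (hasDerivAt_p2 ξ α c) (hG3 ξ α hc) (cont_d2 ξ α c) (cont_D3 ξ α hc)
    (bE2f ξ α hc) (bE2d ξ α hc) y
lemma hGf (hc : 0 < c) (y : ℝ) : HasDerivAt (Gf ξ α c) (Df ξ α c y) y :=
  glue (fun y => hasDerivAt_id' (x := y)) (hG2 ξ α hc) continuous_const (cont_D2 ξ α hc)
    (bE1f ξ α hc) (bE1d ξ α hc) y

-- second derivative chains (right of ξ and left of ξ)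
lemma hD5 (y : ℝ) : HasDerivAt (D5 ξ α c) (E5 ξ α c y) y :=
  glue (hasDerivAt_d5 ξ α c) (fun y => hasDerivAt_const y 1) (cont_e5 ξ α c)
    continuous_const (bE5d ξ α) (by simp only [e5]; ring) y
lemma hD4 (hc : 0 < c) (y : ℝ) : HasDerivAt (D4 ξ α c) (E4 ξ α c y) y :=
  glue (hasDerivAt_d4 ξ α c) (hD5 ξ α) (cont_e4 ξ α c) (cont_E5 ξ α)
    (bE4d ξ α hc) (by rw [E5, if_pos (by linarith)]; simp only [e4, e5]; field_simp; ring) y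
lemma hD23 (hc : 0 < c) (y : ℝ) : HasDerivAt (D23 ξ α c) (E23 ξ α c y) y :=
  glue (hasDerivAt_d2 ξ α c) (hasDerivAt_d3 ξ α c) (cont_e2 ξ α c) (cont_e3 ξ α c)
    (by simp only [d2, d3]; field_simp; ring)
    (by simp only [e2, e3]; field_simp; ring) y
lemma hDL (hc : 0 < c) (y : ℝ) : HasDerivAt (DL ξ α c) (EL ξ α c y) y :=
  glue (fun y => hasDerivAt_const y 1) (hD23 ξ α hc) continuous_const (cont_E23 ξ α hc)
    (by rw [D23, if_pos (by linarith)]; simp only [d2]; ring)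
    (by rw [E23, if_pos (by linarith)]; simp only [e2]; ring) y


-- lower bound on the derivative
lemma Dlow (hc : 0 < c) (hb : |α| * c ≤ 1/4) (x : ℝ) : 1/2 ≤ Df ξ α c x := by
  have habs : 0 ≤ |α| := abs_nonneg α
  unfold Df D2 D3 D4 D5 d2 d3 d4 d5
  split_ifs with h1 h2 h3 h4 h5
  · norm_num
  · -- d2 branch : ξ - c < x ≤ ξ - c/2
    have ht1 : 0 ≤ x - ξ + c := by push_neg at h1; linarith
    have ht2 : x - ξ + c ≤ c/2 := by linarith
    have h0 : |α/(3*c) * (x - ξ + c)^2| ≤ 1/2 := by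
      rw [abs_mul, abs_div, abs_of_pos (by linarith : (0:ℝ) < 3*c),
        abs_of_nonneg (sq_nonneg (x - ξ + c)), div_mul_eq_mul_div, div_le_iff₀ (by linarith)]
      nlinarith [mul_le_mul_of_nonneg_right hb hc.le]
    have := abs_le.mp h0
    linarith [this.1]
  · -- d3 branch : ξ - c/2 < x ≤ ξ
    have ht1 : -(c/2) ≤ x - ξ := by push_neg at h2; linarith
    have ht2 : x - ξ ≤ 0 := by linarith
    have hq1 : 7*(x - ξ)^2/(3*c) ≤ 7*c/12 := by
      rw [div_le_iff₀ (by linarith : (0:ℝ) < 3*c)]; nlinarith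
    have hq0 : 0 ≤ 7*(x - ξ)^2/(3*c) := by positivity
    have hexp : |2*(x - ξ) + c/3 + 7*(x - ξ)^2/(3*c)| ≤ 2*c := by
      rw [abs_le]; constructor <;> linarith
    have h0 : |α * (2*(x - ξ) + c/3 + 7*(x - ξ)^2/(3*c))| ≤ 1/2 := by
      rw [abs_mul]
      calc |α| * |2*(x - ξ) + c/3 + 7*(x - ξ)^2/(3*c)| ≤ |α| * (2*c) :=
            mul_le_mul_of_nonneg_left hexp habs
        _ ≤ 1/2 := by nlinarith
    have := abs_le.mp h0
    linarith [this.2]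
  · -- d4 branch : ξ < x ≤ ξ + c/2
    have ht1 : 0 ≤ x - ξ := by push_neg at h3; linarith
    have ht2 : x - ξ ≤ c/2 := by linarith
    have hq1 : 7*(x - ξ)^2/(3*c) ≤ 7*c/12 := by
      rw [div_le_iff₀ (by linarith : (0:ℝ) < 3*c)]; nlinarith
    have hq0 : 0 ≤ 7*(x - ξ)^2/(3*c) := by positivity
    have hexp : |2*(x - ξ) - c/3 - 7*(x - ξ)^2/(3*c)| ≤ 2*c := by
      rw [abs_le]; constructor <;> linarith
    have h0 : |α * (2*(x - ξ) - c/3 - 7*(x - ξ)^2/(3*c))| ≤ 1/2 := by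
      rw [abs_mul]
      calc |α| * |2*(x - ξ) - c/3 - 7*(x - ξ)^2/(3*c)| ≤ |α| * (2*c) :=
            mul_le_mul_of_nonneg_left hexp habs
        _ ≤ 1/2 := by nlinarith
    have := abs_le.mp h0
    linarith [this.1]
  · -- d5 branch : ξ + c/2 < x ≤ ξ + c
    have ht1 : -(c/2) ≤ x - ξ - c := by push_neg at h4; linarith
    have ht2 : x - ξ - c ≤ 0 := by linarith
    have h0 : |α/(3*c) * (x - ξ - c)^2| ≤ 1/2 := by
      rw [abs_mul, abs_div, abs_of_pos (by linarith : (0:ℝ) < 3*c),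
        abs_of_nonneg (sq_nonneg (x - ξ - c)), div_mul_eq_mul_div, div_le_iff₀ (by linarith)]
      nlinarith [mul_le_mul_of_nonneg_right hb hc.le]
    have := abs_le.mp h0
    linarith [this.1]
  · norm_num

lemma derivGf (hc : 0 < c) : deriv (Gf ξ α c) = Df ξ α c :=
  funext fun x => (hGf ξ α hc x).deriv

lemma contDiffGf (hc : 0 < c) : ContDiff ℝ 1 (Gf ξ α c) :=
  contDiff_one_iff_deriv.mpr ⟨fun x => (hGf ξ α hc x).differentiableAt,
    by rw [derivGf ξ α hc]; exact cont_Df ξ α hc⟩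

lemma Gf_id (hc : 0 < c) (x : ℝ) (hx : c ≤ |x - ξ|) : Gf ξ α c x = x := by
  rcases le_abs.mp hx with h | h
  · -- ξ + c ≤ x
    unfold Gf G2 G3 G4 G5
    split_ifs with h1 h2 h3 h4 h5
    · rfl
    · exfalso; linarith
    · exfalso; linarith
    · exfalso; linarith
    · have hx0 : x - ξ - c = 0 := by linarith
      simp only [p5, hx0]; ring
    · rfl
  · -- x ≤ ξ - c
    unfold Gf
    rw [if_pos (by linarith)]

-- Gf coincides with the cubic pieces on the four subintervals
lemma Gf_eq_p2 (hc : 0 < c) {x : ℝ} (hx : x ∈ Icc (ξ - c) (ξ - c/2)) :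
    Gf ξ α c x = p2 ξ α c x := by
  obtain ⟨hl, hr⟩ := hx
  unfold Gf G2
  split_ifs with h1
  · have hx0 : x = ξ - c := le_antisymm h1 hl
    subst hx0
    simp only [p2]; ring
  · rfl

lemma Gf_eq_p3 (hc : 0 < c) {x : ℝ} (hx : x ∈ Icc (ξ - c/2) ξ) :
    Gf ξ α c x = p3 ξ α c x := by
  obtain ⟨hl, hr⟩ := hx
  unfold Gf G2 G3
  split_ifs with h1 h2
  · exfalso; linarith
  · have hx0 : x = ξ - c/2 := le_antisymm h2 hl
    subst hx0
    simp only [p2, p3]; field_simp; ring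
  · rfl

lemma Gf_eq_p4 (hc : 0 < c) {x : ℝ} (hx : x ∈ Icc ξ (ξ + c/2)) :
    Gf ξ α c x = p4 ξ α c x := by
  obtain ⟨hl, hr⟩ := hx
  unfold Gf G2 G3 G4
  split_ifs with h1 h2 h3
  · exfalso; linarith
  · exfalso; linarith
  · have hx0 : x = ξ := le_antisymm h3 hl
    subst hx0
    simp only [p3, p4]; ring
  · rfl

lemma Gf_eq_p5 (hc : 0 < c) {x : ℝ} (hx : x ∈ Icc (ξ + c/2) (ξ + c)) :
    Gf ξ α c x = p5 ξ α c x := by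
  obtain ⟨hl, hr⟩ := hx
  unfold Gf G2 G3 G4 G5
  split_ifs with h1 h2 h3 h4
  · exfalso; linarith
  · exfalso; linarith
  · exfalso; linarith
  · have hx0 : x = ξ + c/2 := le_antisymm h4 hl
    subst hx0
    simp only [p4, p5]; field_simp; ring
  · rfl

-- the polynomials
open Polynomial in
lemma poly_p2 : ∃ p : Polynomial ℝ, p.degree ≤ 3 ∧ ∀ x : ℝ, p.eval x = p2 ξ α c x := by
  refine ⟨X + C (α/(9*c)) * (X - C ξ + C c)^3, ?_, ?_⟩
  · compute_degree
  · intro x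
    simp only [eval_add, eval_mul, eval_pow, eval_sub, eval_X, eval_C, p2]

open Polynomial in
lemma poly_p3 : ∃ p : Polynomial ℝ, p.degree ≤ 3 ∧ ∀ x : ℝ, p.eval x = p3 ξ α c x := by
  refine ⟨X - C α * ((X - C ξ)^2 + C (c/3) * (X - C ξ) + C (7/(9*c)) * (X - C ξ)^3), ?_, ?_⟩
  · compute_degree
  · intro x
    simp only [eval_add, eval_mul, eval_pow, eval_sub, eval_X, eval_C, p3]
    ring

open Polynomial in
lemma poly_p4 : ∃ p : Polynomial ℝ, p.degree ≤ 3 ∧ ∀ x : ℝ, p.eval x = p4 ξ α c x := by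
  refine ⟨X + C α * ((X - C ξ)^2 - C (c/3) * (X - C ξ) - C (7/(9*c)) * (X - C ξ)^3), ?_, ?_⟩
  · compute_degree
  · intro x
    simp only [eval_add, eval_mul, eval_pow, eval_sub, eval_X, eval_C, p4]
    ring

open Polynomial in
lemma poly_p5 : ∃ p : Polynomial ℝ, p.degree ≤ 3 ∧ ∀ x : ℝ, p.eval x = p5 ξ α c x := by
  refine ⟨X + C (α/(9*c)) * (X - C ξ - C c)^3, ?_, ?_⟩
  · compute_degree
  · intro x
    simp only [eval_add, eval_mul, eval_pow, eval_sub, eval_X, eval_C, p5]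

-- strict monotonicity and the key two-point bound
lemma Gf_strictMono (hc : 0 < c) (hb : |α| * c ≤ 1/4) : StrictMono (Gf ξ α c) := by
  apply strictMono_of_deriv_pos
  intro x
  rw [derivGf ξ α hc]
  linarith [Dlow ξ α hc hb x]

lemma Gf_gap (hc : 0 < c) (hb : |α| * c ≤ 1/4) {u v : ℝ} (huv : v ≤ u) :
    (u - v)/2 ≤ Gf ξ α c u - Gf ξ α c v := by
  have hH : ∀ x : ℝ, HasDerivAt (fun y => Gf ξ α c y - y/2) (Df ξ α c x - 1/2) x :=
    fun x => (hGf ξ α hc x).sub ((hasDerivAt_id x).div_const 2)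
  have hmono : Monotone (fun y => Gf ξ α c y - y/2) := by
    apply monotone_of_deriv_nonneg
    · exact fun x => (hH x).differentiableAt
    · intro x
      rw [(hH x).deriv]
      linarith [Dlow ξ α hc hb x]
  have := hmono huv
  simp only at this
  linarith

lemma Gf_surj (hc : 0 < c) (hb : |α| * c ≤ 1/4) : Function.Surjective (Gf ξ α c) := by
  intro y
  have hcont : Continuous (Gf ξ α c) := (contDiffGf ξ α hc).continuous
  set lo := min y (ξ - c) with hlo
  set hi := max y (ξ + c) with hhi
  have h1 : Gf ξ α c lo = lo := by
    apply Gf_id ξ α hc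
    have : lo ≤ ξ - c := min_le_right _ _
    rw [abs_sub_comm]
    rw [le_abs]
    left; linarith
  have h2 : Gf ξ α c hi = hi := by
    apply Gf_id ξ α hc
    have : ξ + c ≤ hi := le_max_right _ _
    rw [le_abs]
    left; linarith
  have hlohi : lo ≤ hi := le_trans (min_le_left _ _) (le_max_left _ _)
  have hy : y ∈ Icc (Gf ξ α c lo) (Gf ξ α c hi) := by
    rw [h1, h2]
    exact ⟨min_le_left _ _, le_max_left _ _⟩
  obtain ⟨x, _, hx⟩ := intermediate_value_Icc hlohi hcont.continuousOn hy
  exact ⟨x, hx⟩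

lemma Gf_bij (hc : 0 < c) (hb : |α| * c ≤ 1/4) : Function.Bijective (Gf ξ α c) :=
  ⟨(Gf_strictMono ξ α hc hb).injective, Gf_surj ξ α hc hb⟩

lemma Gf_inv_lip (hc : 0 < c) (hb : |α| * c ≤ 1/4) :
    LipschitzWith 2 (Function.invFun (Gf ξ α c)) := by
  have hbij := Gf_bij ξ α hc hb
  have hinv : ∀ z : ℝ, Gf ξ α c (Function.invFun (Gf ξ α c) z) = z :=
    fun z => Function.invFun_eq (hbij.2 z)
  rw [lipschitzWith_iff_dist_le_mul]
  intro a b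
  set u := Function.invFun (Gf ξ α c) a
  set v := Function.invFun (Gf ξ α c) b
  have key : ∀ u' v' : ℝ, v' ≤ u' → u' - v' ≤ 2 * |Gf ξ α c u' - Gf ξ α c v'| := by
    intro u' v' h
    have h1 := Gf_gap ξ α hc hb h
    have h2 : 0 ≤ Gf ξ α c u' - Gf ξ α c v' := by linarith
    rw [abs_of_nonneg h2]
    linarith
  rw [Real.dist_eq, Real.dist_eq]
  have hua : Gf ξ α c u = a := hinv a
  have hvb : Gf ξ α c v = b := hinv b
  push_cast
  rcases le_total v u with h | h
  · have := key u v h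
    rw [hua, hvb] at this
    rw [abs_of_nonneg (by linarith : (0:ℝ) ≤ u - v)]
    linarith [le_abs_self (a - b), neg_abs_le (a - b), this]
  · have := key v u h
    rw [hua, hvb] at this
    rw [abs_of_nonpos (by linarith : u - v ≤ (0:ℝ))]
    have : |b - a| = |a - b| := abs_sub_comm _ _
    linarith [key v u h, abs_sub_comm b a, this]

-- local identification of Df on the two half lines
lemma Df_eq_D4 {y : ℝ} (hc : 0 < c) (hy : ξ < y) : Df ξ α c y = D4 ξ α c y := by
  unfold Df D2 D3
  rw [if_neg (by linarith), if_neg (by linarith), if_neg (by linarith)]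

lemma Df_eq_DL {y : ℝ} (hc : 0 < c) (hy : y < ξ) : Df ξ α c y = DL ξ α c y := by
  unfold Df D2 D3 DL D23
  by_cases h1 : y ≤ ξ - c
  · rw [if_pos h1, if_pos h1]
  · rw [if_neg h1, if_neg h1]
    by_cases h2 : y ≤ ξ - c/2
    · rw [if_pos h2, if_pos h2]
    · rw [if_neg h2, if_neg h2, if_pos (le_of_lt hy)]

lemma Df_diff (hc : 0 < c) {x : ℝ} (hx : x ≠ ξ) : DifferentiableAt ℝ (Df ξ α c) x := by
  rcases lt_or_gt_of_ne hx with h | h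
  · have hloc : Df ξ α c =ᶠ[nhds x] DL ξ α c := by
      filter_upwards [Iio_mem_nhds h] with y hy
      exact Df_eq_DL ξ α hc hy
    exact (hloc.differentiableAt_iff).mpr (hDL ξ α hc x).differentiableAt
  · have hloc : Df ξ α c =ᶠ[nhds x] D4 ξ α c := by
      filter_upwards [Ioi_mem_nhds h] with y hy
      exact Df_eq_D4 ξ α hc hy
    exact (hloc.differentiableAt_iff).mpr (hD4 ξ α hc x).differentiableAt

lemma deriv_Df_right (hc : 0 < c) {y : ℝ} (hy : y ∈ Ioo ξ (ξ + c/2)) :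
    deriv (Df ξ α c) y = e4 ξ α c y := by
  have hloc : Df ξ α c =ᶠ[nhds y] D4 ξ α c := by
    filter_upwards [Ioi_mem_nhds hy.1] with z hz
    exact Df_eq_D4 ξ α hc hz
  rw [hloc.deriv_eq, (hD4 ξ α hc y).deriv, E4, if_pos hy.2.le]

lemma deriv_Df_left (hc : 0 < c) {y : ℝ} (hy : y ∈ Ioo (ξ - c/2) ξ) :
    deriv (Df ξ α c) y = e3 ξ α c y := by
  have hloc : Df ξ α c =ᶠ[nhds y] DL ξ α c := by
    filter_upwards [Iio_mem_nhds hy.2] with z hz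
    exact Df_eq_DL ξ α hc hz
  rw [hloc.deriv_eq, (hDL ξ α hc y).deriv, EL, if_neg (by have := hy.1; intro hcon; linarith),
    E23, if_neg (by have := hy.1; intro hcon; linarith)]

lemma tendsto_right (hc : 0 < c) :
    Tendsto (deriv (Df ξ α c)) (nhdsWithin ξ (Ioi ξ)) (nhds (2 * α)) := by
  have he4 : Tendsto (e4 ξ α c) (nhdsWithin ξ (Ioi ξ)) (nhds (2 * α)) := by
    have h0 : e4 ξ α c ξ = 2 * α := by simp [e4]
    have := ((cont_e4 ξ α c).tendsto ξ).mono_left (nhdsWithin_le_nhds (s := Ioi ξ))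
    rwa [h0] at this
  apply he4.congr'
  filter_upwards [Ioo_mem_nhdsGT_of_mem (Set.left_mem_Ico.mpr (by linarith : ξ < ξ + c/2))]
    with y hy
  exact (deriv_Df_right ξ α hc hy).symm

lemma tendsto_left (hc : 0 < c) :
    Tendsto (deriv (Df ξ α c)) (nhdsWithin ξ (Iio ξ)) (nhds (-(2 * α))) := by
  have he3 : Tendsto (e3 ξ α c) (nhdsWithin ξ (Iio ξ)) (nhds (-(2 * α))) := by
    have h0 : e3 ξ α c ξ = -(2 * α) := by simp [e3]
    have := ((cont_e3 ξ α c).tendsto ξ).mono_left (nhdsWithin_le_nhds (s := Iio ξ))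
    rwa [h0] at this
  apply he3.congr'
  filter_upwards [Ioo_mem_nhdsLT_of_mem (Set.right_mem_Ioc.mpr (by linarith : ξ - c/2 < ξ))]
    with y hy
  exact (deriv_Df_left ξ α hc hy).symm

end PCT

end

/-- existence of an alternative, piecewise cubic transform `Ĝ` which is
`C¹`, equals the identity away from `ξ`, is piecewise a polynomial of degree at most 3,
has positive derivative, is a bijection of `ℝ` with Lipschitz inverse, and whose second
derivative has one-sided limits `2α` and `-2α` at `ξ`. -/
theorem exists_piecewise_cubic_transform (ξ α : ℝ) (hα : α ≠ 0) :
    ∃ (c : ℝ) (G : ℝ → ℝ), 0 < c ∧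
      -- (i) continuously differentiable
      ContDiff ℝ 1 G ∧
      -- (ii) identity away from ξ
      (∀ x : ℝ, c ≤ |x - ξ| → G x = x) ∧
      -- (iii) piecewise cubic on [ξ - c, ξ + c]
      (∃ (n : ℕ), 0 < n ∧ ∃ a : Fin (n + 1) → ℝ,
        StrictMono a ∧ a 0 = ξ - c ∧ a (Fin.last n) = ξ + c ∧
        ∀ i : Fin n, ∃ p : Polynomial ℝ, p.degree ≤ 3 ∧
          ∀ x ∈ Set.Icc (a i.castSucc) (a i.succ), G x = p.eval x) ∧
      -- (iv) positive derivative, bijectivity, Lipschitz inverse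
      (∀ x : ℝ, 0 < deriv G x) ∧
      Function.Bijective G ∧
      (∃ K : ℝ≥0, LipschitzWith K (Function.invFun G)) ∧
      -- (v) twice differentiable off ξ, with one-sided second derivative limits ±2α
      (∀ x : ℝ, x ≠ ξ → DifferentiableAt ℝ (deriv G) x) ∧
      Tendsto (deriv (deriv G)) (nhdsWithin ξ (Set.Ioi ξ)) (nhds (2 * α)) ∧
      Tendsto (deriv (deriv G)) (nhdsWithin ξ (Set.Iio ξ)) (nhds (-(2 * α))) := by
  have hαpos : 0 < |α| := abs_pos.mpr hα
  set c := 1/(4*|α|) with hcdef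
  have hc : 0 < c := by positivity
  have hb : |α| * c ≤ 1/4 := le_of_eq (by rw [hcdef]; field_simp)
  refine ⟨c, PCT.Gf ξ α c, hc, PCT.contDiffGf ξ α hc, fun x hx => PCT.Gf_id ξ α hc x hx, ?_, ?_,
    PCT.Gf_bij ξ α hc hb, ⟨2, PCT.Gf_inv_lip ξ α hc hb⟩, ?_, ?_, ?_⟩
  · -- piecewise cubic
    refine ⟨4, by norm_num, ![ξ - c, ξ - c/2, ξ, ξ + c/2, ξ + c], ?_, rfl, rfl, ?_⟩
    · rw [Fin.strictMono_iff_lt_succ]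
      intro i
      fin_cases i
      · show ξ - c < ξ - c/2; linarith
      · show ξ - c/2 < ξ; linarith
      · show ξ < ξ + c/2; linarith
      · show ξ + c/2 < ξ + c; linarith
    · intro i
      fin_cases i
      · obtain ⟨p, hdeg, hev⟩ := PCT.poly_p2 ξ α (c := c)
        exact ⟨p, hdeg, fun x hx => (PCT.Gf_eq_p2 ξ α hc hx).trans (hev x).symm⟩
      · obtain ⟨p, hdeg, hev⟩ := PCT.poly_p3 ξ α (c := c)
        exact ⟨p, hdeg, fun x hx => (PCT.Gf_eq_p3 ξ α hc hx).trans (hev x).symm⟩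
      · obtain ⟨p, hdeg, hev⟩ := PCT.poly_p4 ξ α (c := c)
        exact ⟨p, hdeg, fun x hx => (PCT.Gf_eq_p4 ξ α hc hx).trans (hev x).symm⟩
      · obtain ⟨p, hdeg, hev⟩ := PCT.poly_p5 ξ α (c := c)
        exact ⟨p, hdeg, fun x hx => (PCT.Gf_eq_p5 ξ α hc hx).trans (hev x).symm⟩
  · intro x
    rw [PCT.derivGf ξ α hc]
    linarith [PCT.Dlow ξ α hc hb x]
  · intro x hx
    rw [PCT.derivGf ξ α hc]
    exact PCT.Df_diff ξ α hc hx
  · rw [PCT.derivGf ξ α hc]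
    exact PCT.tendsto_right ξ α hc
  · rw [PCT.derivGf ξ α hc]
    exact PCT.tendsto_left ξ α hc
end
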